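/- arXiv:1906.10541 — 2 statements merged into one kernel-verified Lean document; each statement's English description precedes it below -/
import Mathlib

section
/- Let A be an n×n real tridiagonal matrix (A_{j,i} = 0 whenever |j-i| > 1), let ρ = max_{j,i} |A_{j,i}|, and let C > 0. Then |(e^A)_{j,i}| ≤ e^{-C|j-i|} · e^{(e^C + e^{-C} + 1)ρ} for all j, i. -/
/-!
Conjugating `A` by `D = diag(e^{s k})` multiplies its `(a, b)` entry by `e^{s (a - b)}`; since `A`
is tridiagonal, every row sum of `|D A D⁻¹|` is at most `(e^s + e^{-s} + 1) ρ`. In the row-sum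
operator norm this bounds `‖e^{D A D⁻¹}‖ = ‖D e^A D⁻¹‖`, hence each of its entries
`e^{s (j - i)} (e^A)_{j,i}`, by `e^{(e^s + e^{-s} + 1) ρ}`. Taking `s = ±C` gives the decay.
-/

open Real

namespace NormedSpace

theorem norm_exp_le_exp_norm {𝕂 𝔸 : Type*} [RCLike 𝕂] [NormedRing 𝔸]
    [NormOneClass 𝔸] [NormedAlgebra 𝕂 𝔸] [CompleteSpace 𝔸] (x : 𝔸) :
    ‖exp x‖ ≤ Real.exp ‖x‖ := by
  have hterm (k : ℕ) : ‖(k.factorial⁻¹ : 𝕂) • x ^ k‖ ≤ ‖x‖ ^ k / k.factorial := by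
    rw [norm_smul, norm_inv, RCLike.norm_natCast, inv_mul_eq_div]
    gcongr
    exact norm_pow_le x k
  rw [exp_eq_tsum 𝕂, Real.exp_eq_exp_ℝ, exp_eq_tsum_div]
  exact (norm_tsum_le_tsum_norm (norm_expSeries_summable' x)).trans <|
    (norm_expSeries_summable' x).tsum_le_tsum hterm (Real.summable_pow_div_factorial _)

end NormedSpace

namespace Matrix

open NormedSpace

variable {m : Type*} [Fintype m]

section LinftyOpNorm

attribute [local instance] Matrix.linftyOpNormedAddCommGroup

variable {n α : Type*} [Fintype n] [NormedAddCommGroup α]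

theorem norm_entry_le_linfty_opNorm (M : Matrix m n α) (i : m) (j : n) : ‖M i j‖ ≤ ‖M‖ := by
  rw [linfty_opNorm_def]
  have hrow : ‖M i j‖₊ ≤ ∑ k, ‖M i k‖₊ :=
    Finset.single_le_sum (f := fun k => ‖M i k‖₊) (fun _ _ => zero_le) (Finset.mem_univ j)
  exact_mod_cast hrow.trans (Finset.le_sup (f := fun i => ∑ k, ‖M i k‖₊) (Finset.mem_univ i))

theorem linfty_opNorm_le_of_row_sum_le (M : Matrix m n α) {K : ℝ} (hK : 0 ≤ K)
    (h : ∀ i, ∑ j, ‖M i j‖ ≤ K) : ‖M‖ ≤ K := by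
  rw [linfty_opNorm_def, ← Real.coe_toNNReal K hK, NNReal.coe_le_coe]
  refine Finset.sup_le fun i _ => ?_
  rw [← NNReal.coe_le_coe, Real.coe_toNNReal K hK, NNReal.coe_sum]
  exact h i

end LinftyOpNorm

variable [DecidableEq m]

theorem exp_diagonal_conj_apply (w : m → ℝ) (A : Matrix m m ℝ) (j i : m) :
    exp (diagonal (fun k => Real.exp (w k)) * A * diagonal (fun k => Real.exp (-w k))) j i
      = Real.exp (w j) * exp A j i * Real.exp (-w i) := by
  set D := diagonal fun k => Real.exp (w k)
  have hD : D * diagonal (fun k => Real.exp (-w k)) = 1 := by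
    simp [D, diagonal_mul_diagonal, ← Real.exp_add]
  have hD' : diagonal (fun k => Real.exp (-w k)) * D = 1 := by
    simp [D, diagonal_mul_diagonal, ← Real.exp_add]
  rw [← inv_eq_right_inv hD, exp_conj D A ⟨⟨D, _, hD, hD'⟩, rfl⟩, inv_eq_right_inv hD,
    mul_diagonal, diagonal_mul]

theorem diagonal_conj_apply (w : m → ℝ) (A : Matrix m m ℝ) (a b : m) :
    (diagonal (fun k => Real.exp (w k)) * A * diagonal (fun k => Real.exp (-w k))) a b
      = Real.exp (w a - w b) * A a b := by
  rw [mul_diagonal, diagonal_mul, sub_eq_add_neg, Real.exp_add]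
  ring

attribute [local instance] Matrix.linftyOpNormedAddCommGroup Matrix.linftyOpNormedRing
  Matrix.linftyOpNormedAlgebra in
theorem abs_exp_apply_le_of_weighted_row_sum_le [Nonempty m] (A : Matrix m m ℝ) (w : m → ℝ)
    {K : ℝ} (hK : ∀ a, ∑ b, Real.exp (w a - w b) * |A a b| ≤ K) (j i : m) :
    |exp A j i| ≤ Real.exp (w i - w j) * Real.exp K := by
  set B := diagonal (fun k => Real.exp (w k)) * A * diagonal (fun k => Real.exp (-w k))
  have hK0 : 0 ≤ K :=
    (Finset.sum_nonneg fun b _ => by positivity).trans (hK (Classical.arbitrary m))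
  have hB : ‖B‖ ≤ K := by
    refine linfty_opNorm_le_of_row_sum_le B hK0 fun a => ?_
    simpa only [B, diagonal_conj_apply, Real.norm_eq_abs, abs_mul, abs_of_pos (Real.exp_pos _)]
      using hK a
  have hexpB : |exp B j i| ≤ Real.exp K :=
    (norm_entry_le_linfty_opNorm _ j i).trans <|
      (norm_exp_le_exp_norm (𝕂 := ℝ) B).trans (Real.exp_le_exp.mpr hB)
  rw [exp_diagonal_conj_apply, abs_mul, abs_mul, abs_of_pos (Real.exp_pos _),
    abs_of_pos (Real.exp_pos _)] at hexpB
  calc |exp A j i|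
      = Real.exp (w i - w j) * (Real.exp (w j) * |exp A j i| * Real.exp (-w i)) := by
        rw [sub_eq_add_neg, Real.exp_add, Real.exp_neg, Real.exp_neg]; field_simp
    _ ≤ Real.exp (w i - w j) * Real.exp K := by gcongr

def IsTridiagonal {R : Type*} [Zero R] {n : ℕ} (A : Matrix (Fin n) (Fin n) R) : Prop :=
  ∀ j i : Fin n, 1 < (((j : ℕ) : ℤ) - ((i : ℕ) : ℤ)).natAbs → A j i = 0

theorem IsTridiagonal.weighted_row_sum_le {n : ℕ} {A : Matrix (Fin n) (Fin n) ℝ}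
    (hA : A.IsTridiagonal) {ρ : ℝ} (hρ : ∀ a b, |A a b| ≤ ρ) (s : ℝ) (a : Fin n) :
    ∑ b : Fin n, Real.exp (s * ((a : ℕ) : ℝ) - s * ((b : ℕ) : ℝ)) * |A a b|
      ≤ (Real.exp s + Real.exp (-s) + 1) * ρ := by
  classical
  let offset (b : Fin n) : ℤ := ((a : ℕ) : ℤ) - ((b : ℕ) : ℤ)
  let near : Finset (Fin n) := {b | (offset b).natAbs ≤ 1}
  have hρ0 : 0 ≤ ρ := (abs_nonneg _).trans (hρ a a)
  have hoffset : Set.InjOn offset near := fun b _ c _ h => by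
    simp only [offset] at h
    omega
  calc ∑ b : Fin n, Real.exp (s * ((a : ℕ) : ℝ) - s * ((b : ℕ) : ℝ)) * |A a b|
      = ∑ b ∈ near, Real.exp (s * offset b) * |A a b| := by
        rw [Finset.sum_filter_of_ne fun b _ hb => by_contra fun h => hb ?_]
        · simp [offset, mul_sub]
        · rw [hA a b (by simpa [offset] using h), abs_zero, mul_zero]
    _ ≤ ∑ b ∈ near, Real.exp (s * offset b) * ρ := by
        gcongr with b; exact hρ a b
    _ = (∑ d ∈ near.image offset, Real.exp (s * d)) * ρ := by
        rw [Finset.sum_image hoffset, Finset.sum_mul]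
    _ ≤ (∑ d ∈ ({-1, 0, 1} : Finset ℤ), Real.exp (s * d)) * ρ := by
        gcongr
        intro d hd
        obtain ⟨b, hb, rfl⟩ := Finset.mem_image.mp hd
        simp only [near, Finset.mem_filter, Finset.mem_univ, true_and] at hb
        simp only [Finset.mem_insert, Finset.mem_singleton]
        omega
    _ = (Real.exp s + Real.exp (-s) + 1) * ρ := by
        rw [Finset.sum_insert (by decide), Finset.sum_insert (by decide), Finset.sum_singleton]
        push_cast
        rw [mul_neg_one, mul_zero, mul_one, Real.exp_zero]
        ring

theorem IsTridiagonal.abs_exp_apply_le {n : ℕ} [NeZero n] {A : Matrix (Fin n) (Fin n) ℝ}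
    (hA : A.IsTridiagonal) {ρ : ℝ} (hρ : ∀ a b, |A a b| ≤ ρ) (s : ℝ) (j i : Fin n) :
    |exp A j i| ≤ Real.exp (s * ((i : ℕ) : ℝ) - s * ((j : ℕ) : ℝ))
      * Real.exp ((Real.exp s + Real.exp (-s) + 1) * ρ) :=
  abs_exp_apply_le_of_weighted_row_sum_le A (fun k => s * ((k : ℕ) : ℝ))
    (hA.weighted_row_sum_le hρ s) j i

end Matrix

theorem exp_entry_decay_tridiagonal_general {n : ℕ} [NeZero n] (A : Matrix (Fin n) (Fin n) ℝ)
    (hA : ∀ j i : Fin n, 1 < (((j : ℕ) : ℤ) - ((i : ℕ) : ℤ)).natAbs → A j i = 0)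
    (ρ : ℝ)
    (hρ : ρ = (Finset.univ : Finset (Fin n × Fin n)).sup' Finset.univ_nonempty
      (fun p => |A p.1 p.2|))
    (C : ℝ) :
    ∀ j i : Fin n,
      |(NormedSpace.exp A) j i|
        ≤ exp (-C * ((((j : ℕ) : ℤ) - ((i : ℕ) : ℤ)).natAbs : ℝ))
            * exp ((exp C + exp (-C) + 1) * ρ) := by
  intro j i
  have hρA (a b : Fin n) : |A a b| ≤ ρ :=
    hρ ▸ Finset.le_sup' (fun p : Fin n × Fin n => |A p.1 p.2|) (Finset.mem_univ (a, b))
  have hdist :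
      ((((j : ℕ) : ℤ) - ((i : ℕ) : ℤ)).natAbs : ℝ) = |((j : ℕ) : ℝ) - ((i : ℕ) : ℝ)| := by
    rw [Nat.cast_natAbs]; push_cast; rfl
  rcases le_total (i : ℕ) (j : ℕ) with hij | hji
  · convert Matrix.IsTridiagonal.abs_exp_apply_le hA hρA C j i using 3
    rw [hdist, abs_of_nonneg (sub_nonneg.mpr (Nat.cast_le.mpr hij))]
    ring
  · convert Matrix.IsTridiagonal.abs_exp_apply_le hA hρA (-C) j i using 3
    · rw [hdist, abs_of_nonpos (sub_nonpos.mpr (Nat.cast_le.mpr hji))]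
      ring
    · rw [neg_neg]
      ring

/-- Entrywise decay bound for the exponential of a tridiagonal matrix. -/
theorem exp_entry_decay_tridiagonal {n : ℕ} [NeZero n] (A : Matrix (Fin n) (Fin n) ℝ)
    (hA : ∀ j i : Fin n, 1 < (((j : ℕ) : ℤ) - ((i : ℕ) : ℤ)).natAbs → A j i = 0)
    (ρ : ℝ)
    (hρ : ρ = (Finset.univ : Finset (Fin n × Fin n)).sup' Finset.univ_nonempty
      (fun p => |A p.1 p.2|))
    (C : ℝ) (hC : 0 < C) :
    ∀ j i : Fin n,
      |(NormedSpace.exp A) j i|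
        ≤ exp (-C * ((((j : ℕ) : ℤ) - ((i : ℕ) : ℤ)).natAbs : ℝ))
            * exp ((exp C + exp (-C) + 1) * ρ) :=
  exp_entry_decay_tridiagonal_general A hA ρ hρ C
end

section
/- (Vector Gronwall inequality) Let M be an n×n matrix with all entries positive, and let x(t), b(t) be continuously differentiable (resp. continuous) ℝ^n-valued functions on [0,T] satisfying the entrywise inequality dx(t)/dt ⪯ M·x(t) + b(t) for all t ∈ [0,T]. Then x(T) ⪯ e^{MT}·x(0) + ∫_0^T e^{M(T-t)}·b(t) dt, entrywise. -/
/-!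
For `t ≤ T` the matrix `e^{M(T-t)}` has nonnegative entries, since every term of its power series
does. Hence the derivative `e^{M(T-t)} (x' - M x)` of `t ↦ e^{M(T-t)} x(t)` is dominated entrywise
by `e^{M(T-t)} b(t)`, and integrating this comparison over `[0, T]` gives the inequality.
-/

noncomputable section
open Real MeasureTheory Set

open NormedSpace

namespace Matrix

variable {ι : Type*} [Fintype ι] [DecidableEq ι]

theorem mulVec_mono_of_nonneg {m n α : Type*} [Fintype n] [Semiring α] [PartialOrder α]
    [IsOrderedRing α] {A : Matrix m n α} (hA : ∀ i j, 0 ≤ A i j) {u v : n → α} (huv : u ≤ v) :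
    A *ᵥ u ≤ A *ᵥ v := fun i =>
  Finset.sum_le_sum fun j _ => mul_le_mul_of_nonneg_left (huv j) (hA i j)

section LinftyOp

attribute [local instance] Matrix.linftyOpNormedRing Matrix.linftyOpNormedAlgebra

theorem exp_apply_nonneg {A : Matrix ι ι ℝ} (hA : ∀ i j, 0 ≤ A i j) (i j : ι) :
    0 ≤ exp A i j := by
  have hsum := exp_series_hasSum_exp' (𝕂 := ℝ) A
  exact (Pi.hasSum.1 (Pi.hasSum.1 hsum i) j).nonneg fun k =>
    mul_nonneg (by positivity) (pow_apply_nonneg hA k i j)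

theorem hasDerivAt_exp_smul_apply (M : Matrix ι ι ℝ) (t : ℝ) (i j : ι) :
    HasDerivAt (fun s : ℝ => exp (s • M) i j) ((exp (t • M) * M) i j) t :=
  ((entryLinearMap ℝ ℝ i j).toContinuousLinearMap.hasFDerivAt.comp_hasDerivAt t
    (hasDerivAt_exp_smul_const (𝕂 := ℝ) M t))

end LinftyOp

theorem hasDerivAt_mulVec {m n : Type*} [Fintype n] {A : ℝ → Matrix m n ℝ} {A' : Matrix m n ℝ}
    {v : ℝ → n → ℝ} {v' : n → ℝ} {t : ℝ} (hA : ∀ i j, HasDerivAt (fun s => A s i j) (A' i j) t)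
    (hv : HasDerivAt v v' t) :
    HasDerivAt (fun s => A s *ᵥ v s) (A' *ᵥ v t + A t *ᵥ v') t := by
  refine hasDerivAt_pi.2 fun i => ?_
  have := HasDerivAt.fun_sum (u := Finset.univ) fun j _ => (hA i j).fun_mul (hasDerivAt_pi.1 hv j)
  simpa only [mulVec, dotProduct, Pi.add_apply, ← Finset.sum_add_distrib] using this

theorem hasDerivAt_exp_sub_smul_apply (M : Matrix ι ι ℝ) (T t : ℝ) (i j : ι) :
    HasDerivAt (fun s => exp ((T - s) • M) i j) ((-(exp ((T - t) • M) * M)) i j) t := by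
  simpa [Function.comp_def] using
    (hasDerivAt_exp_smul_apply M (T - t) i j).comp t ((hasDerivAt_id t).const_sub T)

theorem hasDerivAt_exp_sub_smul_mulVec (M : Matrix ι ι ℝ) (T : ℝ) {v : ℝ → ι → ℝ} {v' : ι → ℝ}
    {t : ℝ} (hv : HasDerivAt v v' t) :
    HasDerivAt (fun s => exp ((T - s) • M) *ᵥ v s) (exp ((T - t) • M) *ᵥ (v' - M *ᵥ v t)) t := by
  convert hasDerivAt_mulVec (hasDerivAt_exp_sub_smul_apply M T t) hv using 1
  rw [neg_mulVec, ← mulVec_mulVec, mulVec_sub, sub_eq_neg_add]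

theorem continuous_exp_sub_smul (M : Matrix ι ι ℝ) (T : ℝ) :
    Continuous fun s : ℝ => exp ((T - s) • M) :=
  continuous_pi fun i => continuous_pi fun j => continuous_iff_continuousAt.2 fun t =>
    (hasDerivAt_exp_sub_smul_apply M T t i j).continuousAt

end Matrix

open Matrix

theorem vector_gronwall_general {n : ℕ} (M : Matrix (Fin n) (Fin n) ℝ)
    (hM : ∀ i j, 0 < M i j)
    (T : ℝ) (hT : 0 ≤ T)
    (x x' b : ℝ → (Fin n → ℝ))
    (hx : ∀ t ∈ Icc (0 : ℝ) T, HasDerivAt x (x' t) t)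
    (hb : ContinuousOn b (Icc 0 T))
    (hineq : ∀ t ∈ Icc (0 : ℝ) T, ∀ i, x' t i ≤ (M.mulVec (x t) + b t) i) :
    ∀ i, x T i ≤ (NormedSpace.exp (T • M)).mulVec (x 0) i
      + ∫ t in (0 : ℝ)..T, ((NormedSpace.exp ((T - t) • M)).mulVec (b t)) i := by
  intro i
  have hderiv : ∀ t ∈ Icc 0 T, HasDerivAt (fun s => (exp ((T - s) • M) *ᵥ x s) i)
      ((exp ((T - t) • M) *ᵥ (x' t - M *ᵥ x t)) i) t := fun t ht =>
    hasDerivAt_pi.1 (hasDerivAt_exp_sub_smul_mulVec M T (hx t ht)) i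
  have hle : ∀ t ∈ Icc 0 T,
      (exp ((T - t) • M) *ᵥ (x' t - M *ᵥ x t)) i ≤ (exp ((T - t) • M) *ᵥ b t) i := fun t ht =>
    mulVec_mono_of_nonneg
      (exp_apply_nonneg fun p q => smul_nonneg (sub_nonneg.2 ht.2) (hM p q).le)
      (fun j => sub_le_iff_le_add'.2 (hineq t ht j)) i
  have hint : IntegrableOn (fun t => (exp ((T - t) • M) *ᵥ b t) i) (Icc 0 T) :=
    ((continuous_apply i).comp_continuousOn
      (((continuous_fst.matrix_mulVec continuous_snd).comp_continuousOn
        ((continuous_exp_sub_smul M T).continuousOn.prodMk hb)))).integrableOn_Icc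
  have key := intervalIntegral.sub_le_integral_of_hasDeriv_right_of_le hT
    (fun t ht => (hderiv t ht).continuousAt.continuousWithinAt)
    (fun t ht => (hderiv t (Ioo_subset_Icc_self ht)).hasDerivWithinAt) hint
    (fun t ht => hle t (Ioo_subset_Icc_self ht))
  simp only [sub_self, zero_smul, NormedSpace.exp_zero, one_mulVec, sub_zero] at key
  linarith

/-- Vector-valued Gronwall inequality: if `x' ⪯ M·x + b` entrywise on `[0,T]` with `M`
entrywise positive, then `x(T) ⪯ e^{MT}·x(0) + ∫₀ᵀ e^{M(T-t)}·b(t) dt` entrywise. -/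
theorem vector_gronwall {n : ℕ} (M : Matrix (Fin n) (Fin n) ℝ)
    (hM : ∀ i j, 0 < M i j)
    (T : ℝ) (hT : 0 ≤ T)
    (x x' b : ℝ → (Fin n → ℝ))
    (hx : ∀ t ∈ Icc (0 : ℝ) T, HasDerivAt x (x' t) t)
    (hx' : ContinuousOn x' (Icc 0 T))
    (hb : ContinuousOn b (Icc 0 T))
    (hineq : ∀ t ∈ Icc (0 : ℝ) T, ∀ i, x' t i ≤ (M.mulVec (x t) + b t) i) :
    ∀ i, x T i ≤ (NormedSpace.exp (T • M)).mulVec (x 0) i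
      + ∫ t in (0 : ℝ)..T, ((NormedSpace.exp ((T - t) • M)).mulVec (b t)) i :=
  vector_gronwall_general M hM T hT x x' b hx hb hineq
end
end
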